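/- On the geometric integer network (ℤ, c^n) with c > 1 and r = 1/c, the function w_o(n) = a·r^{|n|} with a = r/(2(1−r)) is a monopole at 0: it has finite energy E(w_o) = r/(2(1−r)) and satisfies Δw_o(0) = 1 and Δw_o(n) = 0 for n ≠ 0. -/

import Mathlib

/-!
Since `c * r = 1`, the current `c^(k+1) * (a r^k - a r^(k+1))` through every edge at distance `k`
from the origin equals `a (c - 1)`, flowing away from `0` on both sides. Kirchhoff's law therefore
holds at every `n ≠ 0`, the net outflow at `0` is `2 a (c - 1) = 1`, and the energy is a two-sided
geometric series summing to `2 a² (c - 1) = a`.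
-/

/-- The conductance of the edge (n−1, n) in the geometric integer network (ℤ, cⁿ). -/
noncomputable def geomCond (c : ℝ) (n : ℤ) : ℝ := c ^ (max n.natAbs (n - 1).natAbs)

noncomputable def geomPotential (a r : ℝ) (n : ℤ) : ℝ := a * r ^ n.natAbs

lemma geomCond_neg_natCast (c : ℝ) (k : ℕ) : geomCond c (-k) = c ^ (k + 1) := by
  rw [geomCond, show max (-(k : ℤ)).natAbs (-(k : ℤ) - 1).natAbs = k + 1 by omega]

lemma geomCond_natCast_add_one (c : ℝ) (k : ℕ) : geomCond c (k + 1) = c ^ (k + 1) := by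
  rw [geomCond, show max ((k : ℤ) + 1).natAbs ((k : ℤ) + 1 - 1).natAbs = k + 1 by omega]

lemma geomPotential_neg_natCast (a r : ℝ) (k : ℕ) : geomPotential a r (-k) = a * r ^ k := by
  simp [geomPotential]

lemma geomPotential_neg_natCast_sub_one (a r : ℝ) (k : ℕ) :
    geomPotential a r (-k - 1) = a * r ^ (k + 1) := by
  rw [geomPotential, show (-(k : ℤ) - 1).natAbs = k + 1 by omega]

lemma geomPotential_natCast (a r : ℝ) (k : ℕ) : geomPotential a r k = a * r ^ k := by
  simp [geomPotential]

lemma geomPotential_natCast_add_one (a r : ℝ) (k : ℕ) :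
    geomPotential a r (k + 1) = a * r ^ (k + 1) := by
  rw [geomPotential, show ((k : ℤ) + 1).natAbs = k + 1 by omega]

section Current

variable {c r : ℝ}

lemma pow_succ_mul_sub_pow_succ (hcr : c * r = 1) (a : ℝ) (k : ℕ) :
    c ^ (k + 1) * (a * r ^ k - a * r ^ (k + 1)) = a * (c - 1) := by
  have hck : c ^ k * r ^ k = 1 := by rw [← mul_pow, hcr, one_pow]
  linear_combination (a * c * (1 - r)) * hck - a * hcr

lemma pow_succ_mul_sub_pow_succ_sq (hcr : c * r = 1) (a : ℝ) (k : ℕ) :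
    c ^ (k + 1) * (a * r ^ k - a * r ^ (k + 1)) ^ 2 = a ^ 2 * (c - 1) * (1 - r) * r ^ k := by
  rw [sq, ← mul_assoc, pow_succ_mul_sub_pow_succ hcr]
  ring

lemma geomCond_mul_sub_geomPotential_of_nonpos (hcr : c * r = 1) (a : ℝ) {n : ℤ} (hn : n ≤ 0) :
    geomCond c n * (geomPotential a r n - geomPotential a r (n - 1)) = a * (c - 1) := by
  obtain ⟨k, rfl⟩ : ∃ k : ℕ, n = -k := ⟨n.natAbs, by omega⟩
  rw [geomCond_neg_natCast, geomPotential_neg_natCast, geomPotential_neg_natCast_sub_one,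
    pow_succ_mul_sub_pow_succ hcr]

lemma geomCond_mul_sub_geomPotential_of_pos (hcr : c * r = 1) (a : ℝ) {n : ℤ} (hn : 0 < n) :
    geomCond c n * (geomPotential a r n - geomPotential a r (n - 1)) = -(a * (c - 1)) := by
  obtain ⟨k, rfl⟩ : ∃ k : ℕ, n = k + 1 := ⟨(n - 1).toNat, by omega⟩
  rw [geomCond_natCast_add_one, add_sub_cancel_right, geomPotential_natCast_add_one,
    geomPotential_natCast, ← pow_succ_mul_sub_pow_succ hcr]
  ring

lemma laplacian_geomPotential (hcr : c * r = 1) (a : ℝ) (n : ℤ) :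
    geomCond c n * (geomPotential a r n - geomPotential a r (n - 1))
      + geomCond c (n + 1) * (geomPotential a r n - geomPotential a r (n + 1))
      = if n = 0 then 2 * a * (c - 1) else 0 := by
  have hout : geomCond c (n + 1) * (geomPotential a r n - geomPotential a r (n + 1))
      = -(geomCond c (n + 1) * (geomPotential a r (n + 1) - geomPotential a r (n + 1 - 1))) := by
    rw [add_sub_cancel_right]
    ring
  rw [hout]
  rcases lt_trichotomy n 0 with hn | rfl | hn
  · rw [geomCond_mul_sub_geomPotential_of_nonpos hcr a hn.le,
      geomCond_mul_sub_geomPotential_of_nonpos hcr a (by omega), if_neg hn.ne]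
    ring
  · rw [geomCond_mul_sub_geomPotential_of_nonpos hcr a le_rfl,
      geomCond_mul_sub_geomPotential_of_pos hcr a (by omega), if_pos rfl]
    ring
  · rw [geomCond_mul_sub_geomPotential_of_pos hcr a hn,
      geomCond_mul_sub_geomPotential_of_pos hcr a (by omega), if_neg hn.ne']
    ring

lemma hasSum_geomCond_mul_sub_geomPotential_sq (hcr : c * r = 1) (a : ℝ) (hr0 : 0 ≤ r)
    (hr1 : r < 1) :
    HasSum (fun n : ℤ => geomCond c n * (geomPotential a r n - geomPotential a r (n - 1)) ^ 2)
      (2 * a ^ 2 * (c - 1)) := by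
  have hgeom : HasSum (fun k : ℕ => a ^ 2 * (c - 1) * (1 - r) * r ^ k) (a ^ 2 * (c - 1)) := by
    have h := (hasSum_geometric_of_lt_one hr0 hr1).mul_left (a ^ 2 * (c - 1) * (1 - r))
    rwa [mul_inv_cancel_right₀ (sub_pos.mpr hr1).ne'] at h
  -- The edges `(-k-1, -k)` and `(k, k+1)` carry the same energy, so reflect and split ℤ there.
  rw [← (Equiv.neg ℤ).hasSum_iff,
    show 2 * a ^ 2 * (c - 1) = a ^ 2 * (c - 1) + a ^ 2 * (c - 1) by ring]
  refine HasSum.of_nat_of_neg_add_one ?_ ?_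
  · convert hgeom using 2 with k
    rw [Function.comp_apply, Equiv.neg_apply, geomCond_neg_natCast, geomPotential_neg_natCast,
      geomPotential_neg_natCast_sub_one, pow_succ_mul_sub_pow_succ_sq hcr]
  · convert hgeom using 2 with k
    rw [Function.comp_apply, Equiv.neg_apply, neg_neg, geomCond_natCast_add_one,
      add_sub_cancel_right, geomPotential_natCast_add_one, geomPotential_natCast,
      ← pow_succ_mul_sub_pow_succ_sq hcr]
    ring

end Current

theorem geometric_integers_monopole (c : ℝ) (hc : 1 < c) (r : ℝ) (hr : r = 1 / c)
    (a : ℝ) (ha : a = r / (2 * (1 - r)))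
    (w : ℤ → ℝ) (hw : ∀ n : ℤ, w n = a * r ^ n.natAbs) :
    (∑' n : ℤ, geomCond c n * (w n - w (n - 1)) ^ 2 = r / (2 * (1 - r)))
    ∧ geomCond c 0 * (w 0 - w (-1)) + geomCond c 1 * (w 0 - w 1) = 1
    ∧ ∀ n : ℤ, n ≠ 0 →
        geomCond c n * (w n - w (n - 1)) + geomCond c (n + 1) * (w n - w (n + 1)) = 0 := by
  have hc0 : 0 < c := by linarith
  have hcr : c * r = 1 := by rw [hr]; field_simp
  have hr0 : 0 ≤ r := by rw [hr]; positivity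
  have hr1 : r < 1 := by rw [hr, div_lt_one hc0]; exact hc
  have hflux : 2 * a * (c - 1) = 1 := by
    rw [ha, hr]
    field_simp [(sub_pos.mpr hc).ne']
  obtain rfl : w = geomPotential a r := funext hw
  refine ⟨?_, ?_, fun n hn => ?_⟩
  · rw [(hasSum_geomCond_mul_sub_geomPotential_sq hcr a hr0 hr1).tsum_eq, ← ha]
    linear_combination a * hflux
  · simpa [hflux] using laplacian_geomPotential hcr a 0
  · simpa [hn] using laplacian_geomPotential hcr a n
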